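/- There exists a bijection h : [0,1]² → [0,1] such that h(x,y) = C(x,y) for all (x,y) ∈ [0,1) × (0,1); in particular, h agrees with Cantor's interleaving map C almost everywhere on [0,1]² with respect to the Lebesgue measure. -/

import Mathlib

/-
Decimal expansions without a tail of nines are unique, and interleaving the expansions of
`x` and `y` gives again such an expansion, so Cantor's map is injective on `[0,1)²`. The
parts left over, `[0,1]² \ [0,1) × (0,1)` and `[0,1] \ C([0,1) × (0,1))`, both have the
cardinality of the continuum (the second one contains every number whose digits in the even
decimal places are all `9`), so any bijection between them extends `C` to a bijection of
`[0,1]²` onto `[0,1]`. The first leftover part is a Lebesgue null set.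
-/

open Set

/-- The `k`-th digit of the proper decimal expansion of `x`
(meaningful for `x ∈ [0,1)` and `k ≥ 1`): `d_k(x) = ⌊10^k x⌋ - 10⌊10^{k-1} x⌋`. -/
noncomputable def digit (k : ℕ) (x : ℝ) : ℤ :=
  ⌊(10 : ℝ) ^ k * x⌋ - 10 * ⌊(10 : ℝ) ^ (k - 1) * x⌋

/-- Cantor's interleaving map
`C(x,y) = ∑_{k≥1} d_k(x)/10^{2k-1} + ∑_{k≥1} d_k(y)/10^{2k}`. -/
noncomputable def cantorC (x y : ℝ) : ℝ :=
  (∑' k : ℕ, (digit (k + 1) x : ℝ) / 10 ^ (2 * (k + 1) - 1)) +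
    ∑' k : ℕ, (digit (k + 1) y : ℝ) / 10 ^ (2 * (k + 1))

open Filter MeasureTheory Cardinal

universe u

theorem Set.InjOn.exists_bijOn_extend {α β : Type u} {f : α → β} {A S : Set α} {T : Set β}
    (hf : InjOn f A) (hAS : A ⊆ S) (hfT : MapsTo f A T)
    (hcard : #(S \ A : Set α) = #(T \ f '' A : Set β)) :
    ∃ h : α → β, BijOn h S T ∧ EqOn h f A := by
  classical
  obtain ⟨e⟩ := Cardinal.eq.mp hcard
  set h : α → β := fun p => if hp : p ∈ S \ A then e ⟨p, hp⟩ else f p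
  have h_eqOn : EqOn h f A := fun p hp => dif_neg fun hp' => hp'.2 hp
  have h_bijOn_A : BijOn h A (f '' A) := hf.bijOn_image.congr h_eqOn.symm
  have h_bijOn_sdiff : BijOn h (S \ A) (T \ f '' A) := by
    refine ⟨fun p hp => ?_, fun p hp q hq hpq => ?_, fun t ht => ?_⟩
    · simpa only [h, dif_pos hp] using (e ⟨p, hp⟩).2
    · simp only [h, dif_pos hp, dif_pos hq] at hpq
      exact congrArg Subtype.val (e.injective (Subtype.ext hpq))
    · have hs := (e.symm ⟨t, ht⟩).2
      refine ⟨e.symm ⟨t, ht⟩, hs, ?_⟩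
      simp only [h, dif_pos hs, Subtype.coe_eta, Equiv.apply_symm_apply]
  have h_injOn : InjOn h (A ∪ S \ A) := by
    refine (injOn_union disjoint_sdiff_right).2 ⟨h_bijOn_A.injOn, h_bijOn_sdiff.injOn, ?_⟩
    intro p hp q hq hpq
    exact (h_bijOn_sdiff.mapsTo hq).2 (hpq ▸ h_bijOn_A.mapsTo hp)
  have := h_bijOn_A.union h_bijOn_sdiff h_injOn
  rw [union_sdiff_cancel hAS, union_sdiff_cancel hfT.image_subset] at this
  exact ⟨h, this, h_eqOn⟩

/-- `digitSum g = 0.g₀g₁g₂…`: the digit `g k` sits in the `(k+1)`-th decimal place. -/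
noncomputable def digitSum (g : ℕ → ℤ) : ℝ := ∑' k, (g k : ℝ) / 10 ^ (k + 1)

structure IsProperExpansion (g : ℕ → ℤ) : Prop where
  mem_Icc : ∀ k, g k ∈ Icc (0 : ℤ) 9
  frequently_ne_nine : ∃ᶠ k in atTop, g k ≠ 9

section DigitSum

variable {g g' : ℕ → ℤ}

theorem hasSum_nine_div_pow : HasSum (fun k : ℕ => (9 : ℝ) / 10 ^ (k + 1)) 1 := by
  have h_term : (fun k : ℕ => (9 : ℝ) / 10 ^ (k + 1)) = fun k => 9 / 10 * 10⁻¹ ^ k := by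
    ext k
    rw [pow_succ, inv_pow]
    field_simp
  have h := (hasSum_geometric_of_lt_one (r := (10 : ℝ)⁻¹) (by norm_num) (by norm_num)).mul_left
    (9 / 10)
  rwa [← h_term, show (9 / 10 : ℝ) * (1 - 10⁻¹)⁻¹ = 1 by norm_num] at h

theorem summable_digitSum (hg : ∀ k, g k ∈ Icc (0 : ℤ) 9) :
    Summable fun k => (g k : ℝ) / 10 ^ (k + 1) := by
  refine hasSum_nine_div_pow.summable.of_nonneg_of_le (fun k => ?_) (fun k => ?_)
  · exact div_nonneg (by exact_mod_cast (hg k).1) (by positivity)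
  · exact div_le_div_of_nonneg_right (by exact_mod_cast (hg k).2) (by positivity)

theorem digitSum_mem_Icc (hg : ∀ k, g k ∈ Icc (0 : ℤ) 9) : digitSum g ∈ Icc 0 1 := by
  refine ⟨tsum_nonneg fun k => div_nonneg (by exact_mod_cast (hg k).1) (by positivity), ?_⟩
  refine hasSum_le (fun k => ?_) (summable_digitSum hg).hasSum hasSum_nine_div_pow
  exact div_le_div_of_nonneg_right (by exact_mod_cast (hg k).2) (by positivity)

theorem IsProperExpansion.digitSum_lt_one (hg : IsProperExpansion g) : digitSum g < 1 := by
  obtain ⟨k, hk⟩ := hg.frequently_ne_nine.exists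
  refine hasSum_lt (i := k) (fun j => ?_) ?_ (summable_digitSum hg.mem_Icc).hasSum
    hasSum_nine_div_pow
  · have : (g j : ℝ) ≤ 9 := by exact_mod_cast (hg.mem_Icc j).2
    exact div_le_div_of_nonneg_right this (by positivity)
  · have : (g k : ℝ) < 9 := by exact_mod_cast (hg.mem_Icc k).2.lt_of_ne hk
    exact div_lt_div_of_pos_right this (by positivity)

theorem IsProperExpansion.shift (hg : IsProperExpansion g) (n : ℕ) :
    IsProperExpansion fun k => g (k + n) where
  mem_Icc k := hg.mem_Icc (k + n)
  frequently_ne_nine := by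
    rw [frequently_atTop]
    intro a
    obtain ⟨b, hab, hb⟩ := frequently_atTop.mp hg.frequently_ne_nine (a + n)
    exact ⟨b - n, by omega, by rwa [Nat.sub_add_cancel (by omega)]⟩

theorem digitSum_eq_sum_add (hg : ∀ k, g k ∈ Icc (0 : ℤ) 9) (n : ℕ) :
    digitSum g = ∑ k ∈ Finset.range n, (g k : ℝ) / 10 ^ (k + 1) +
      digitSum (fun k => g (k + n)) / 10 ^ n := by
  rw [digitSum, digitSum, ← (summable_digitSum hg).sum_add_tsum_nat_add n, ← tsum_div_const]
  congr 1
  refine tsum_congr fun k => ?_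
  rw [show k + n + 1 = k + 1 + n by ring, pow_add, div_div]

theorem digitSum_lt_digitSum (hg : IsProperExpansion g) (hg' : ∀ k, g' k ∈ Icc (0 : ℤ) 9)
    {n : ℕ} (hlt : g n < g' n) (heq : ∀ k < n, g k = g' k) : digitSum g < digitSum g' := by
  have h_prefix : ∑ k ∈ Finset.range n, (g k : ℝ) / 10 ^ (k + 1) =
      ∑ k ∈ Finset.range n, (g' k : ℝ) / 10 ^ (k + 1) :=
    Finset.sum_congr rfl fun k hk => by rw [heq k (Finset.mem_range.mp hk)]
  have h_tail := (hg.shift (n + 1)).digitSum_lt_one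
  have h_tail' := (digitSum_mem_Icc fun k => hg' (k + (n + 1))).1
  have h_digit : (g n : ℝ) + 1 ≤ g' n := by exact_mod_cast hlt
  -- the tail of `g` is worth less than the unit that `g' n` gains over `g n`
  rw [digitSum_eq_sum_add hg.mem_Icc (n + 1), digitSum_eq_sum_add hg' (n + 1),
    Finset.sum_range_succ, Finset.sum_range_succ, h_prefix, add_assoc, add_assoc,
    add_lt_add_iff_left, ← add_div, ← add_div]
  gcongr ?_ / _
  linarith

theorem injOn_digitSum : InjOn digitSum {g | IsProperExpansion g} := by
  intro g hg g' hg' h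
  by_contra hne
  have hex : ∃ n, g n ≠ g' n := Function.ne_iff.mp hne
  classical
  have heq : ∀ k < Nat.find hex, g k = g' k := fun k hk => not_not.mp (Nat.find_min hex hk)
  rcases (Nat.find_spec hex).lt_or_gt with hlt | hgt
  · exact (digitSum_lt_digitSum hg hg'.mem_Icc hlt heq).ne h
  · exact (digitSum_lt_digitSum hg' hg.mem_Icc hgt fun k hk => (heq k hk).symm).ne' h

end DigitSum

section DecimalDigits

noncomputable def decimalDigits (x : ℝ) (k : ℕ) : ℤ := digit (k + 1) x

theorem decimalDigits_eq (x : ℝ) (k : ℕ) :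
    decimalDigits x k = ⌊(10 : ℝ) * (10 ^ k * x)⌋ - 10 * ⌊(10 : ℝ) ^ k * x⌋ := by
  simp only [decimalDigits, digit, add_tsub_cancel_right, pow_succ, mul_comm _ (10 : ℝ),
    mul_assoc]

theorem decimalDigits_mem_Icc (x : ℝ) (k : ℕ) : decimalDigits x k ∈ Icc (0 : ℤ) 9 := by
  rw [decimalDigits_eq]
  set t := (10 : ℝ) ^ k * x
  have h_lower : 10 * ⌊t⌋ ≤ ⌊10 * t⌋ :=
    Int.le_floor.mpr (by push_cast; linarith [Int.floor_le t])
  have h_upper : ⌊10 * t⌋ < 10 * ⌊t⌋ + 10 :=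
    Int.floor_lt.mpr (by push_cast; linarith [Int.lt_floor_add_one t])
  constructor <;> omega

theorem sum_decimalDigits {x : ℝ} (hx : x ∈ Ico 0 1) (n : ℕ) :
    ∑ k ∈ Finset.range n, (decimalDigits x k : ℝ) / 10 ^ (k + 1) =
      ⌊(10 : ℝ) ^ n * x⌋ / 10 ^ n := by
  induction n with
  | zero => simp [Int.floor_eq_zero_iff.mpr hx]
  | succ n ih =>
    rw [Finset.sum_range_succ, ih, decimalDigits_eq, pow_succ, mul_comm _ (10 : ℝ), mul_assoc]
    push_cast
    field_simp
    ring

theorem hasSum_decimalDigits {x : ℝ} (hx : x ∈ Ico 0 1) :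
    HasSum (fun k => (decimalDigits x k : ℝ) / 10 ^ (k + 1)) x := by
  rw [hasSum_iff_tendsto_nat_of_nonneg fun k => div_nonneg
    (by exact_mod_cast (decimalDigits_mem_Icc x k).1) (by positivity)]
  simp only [sum_decimalDigits hx]
  have h_lower (n : ℕ) : x - 10⁻¹ ^ n ≤ ⌊(10 : ℝ) ^ n * x⌋ / 10 ^ n := by
    rw [le_div_iff₀ (by positivity), sub_mul, inv_pow, inv_mul_cancel₀ (by positivity),
      mul_comm]
    linarith [Int.sub_one_lt_floor ((10 : ℝ) ^ n * x)]
  have h_upper (n : ℕ) : ⌊(10 : ℝ) ^ n * x⌋ / 10 ^ n ≤ x := by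
    rw [div_le_iff₀ (by positivity), mul_comm]
    exact Int.floor_le _
  have h_lim : Tendsto (fun n : ℕ => x - 10⁻¹ ^ n) atTop (nhds x) := by
    simpa using tendsto_const_nhds.sub
      (tendsto_pow_atTop_nhds_zero_of_lt_one (r := (10 : ℝ)⁻¹) (by norm_num) (by norm_num))
  exact tendsto_of_tendsto_of_tendsto_of_le_of_le h_lim tendsto_const_nhds h_lower h_upper

theorem leftInvOn_digitSum_decimalDigits : LeftInvOn digitSum decimalDigits (Ico 0 1) :=
  fun _ hx => (hasSum_decimalDigits hx).tsum_eq

theorem isProperExpansion_decimalDigits {x : ℝ} (hx : x ∈ Ico 0 1) :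
    IsProperExpansion (decimalDigits x) := by
  refine ⟨decimalDigits_mem_Icc x, fun h_nines => ?_⟩
  obtain ⟨N, hN⟩ := eventually_atTop.mp h_nines
  have h_tail : digitSum (fun k => decimalDigits x (k + N)) = 1 := by
    rw [← hasSum_nine_div_pow.tsum_eq, digitSum]
    exact tsum_congr fun k => by rw [not_not.mp (hN (k + N) (by omega))]; norm_num
  have h_split := digitSum_eq_sum_add (decimalDigits_mem_Icc x) N
  rw [leftInvOn_digitSum_decimalDigits hx, sum_decimalDigits hx, h_tail, ← add_div,
    eq_div_iff (by positivity)] at h_split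
  linarith [Int.lt_floor_add_one ((10 : ℝ) ^ N * x)]

end DecimalDigits

section Interleave

variable {β : Type*}

def interleave (a b : ℕ → β) (n : ℕ) : β := if Even n then a (n / 2) else b (n / 2)

@[simp]
theorem interleave_two_mul (a b : ℕ → β) (k : ℕ) : interleave a b (2 * k) = a k := by
  simp [interleave]

@[simp]
theorem interleave_two_mul_add_one (a b : ℕ → β) (k : ℕ) :
    interleave a b (2 * k + 1) = b k := by
  simp [interleave, Nat.mul_add_div]

theorem interleave_mem {a b : ℕ → β} {s : Set β} (ha : ∀ k, a k ∈ s) (hb : ∀ k, b k ∈ s)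
    (n : ℕ) : interleave a b n ∈ s := by
  unfold interleave; split
  · exact ha _
  · exact hb _

theorem interleave_injective2 : Function.Injective2 (interleave (β := β)) :=
  fun _ _ _ _ h => ⟨funext fun k => by simpa using congrFun h (2 * k),
    funext fun k => by simpa using congrFun h (2 * k + 1)⟩

end Interleave

theorem IsProperExpansion.interleave {a b : ℕ → ℤ} (ha : IsProperExpansion a)
    (hb : ∀ k, b k ∈ Icc (0 : ℤ) 9) : IsProperExpansion (interleave a b) where
  mem_Icc := interleave_mem ha.mem_Icc hb
  frequently_ne_nine := by
    rw [frequently_atTop]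
    intro N
    obtain ⟨k, hNk, hk⟩ := frequently_atTop.mp ha.frequently_ne_nine N
    exact ⟨2 * k, by omega, by simpa using hk⟩

theorem digitSum_interleave_inj {a a' b b' : ℕ → ℤ} (ha : IsProperExpansion a)
    (ha' : IsProperExpansion a') (hb : ∀ k, b k ∈ Icc (0 : ℤ) 9)
    (hb' : ∀ k, b' k ∈ Icc (0 : ℤ) 9)
    (h : digitSum (interleave a b) = digitSum (interleave a' b')) : a = a' ∧ b = b' :=
  interleave_injective2 (injOn_digitSum (ha.interleave hb) (ha'.interleave hb') h)

theorem cantorC_eq_digitSum (x y : ℝ) :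
    cantorC x y = digitSum (interleave (decimalDigits x) (decimalDigits y)) := by
  have hsum := summable_digitSum
    (interleave_mem (decimalDigits_mem_Icc x) (decimalDigits_mem_Icc y))
  have h := tsum_even_add_odd
    (f := fun k => ((interleave (decimalDigits x) (decimalDigits y) k : ℤ) : ℝ) / 10 ^ (k + 1))
    (hsum.comp_injective (i := fun k => 2 * k) (mul_right_injective₀ two_ne_zero))
    (hsum.comp_injective (i := fun k => 2 * k + 1) fun _ _ h => by simpa using h)
  rw [digitSum, ← h, cantorC]
  congr 1 <;> refine tsum_congr fun k => ?_
  · rw [interleave_two_mul, decimalDigits, show 2 * (k + 1) - 1 = 2 * k + 1 by omega]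
  · rw [interleave_two_mul_add_one, decimalDigits, show 2 * (k + 1) = 2 * k + 1 + 1 by ring]

theorem cantorC_mem_Icc (x y : ℝ) : cantorC x y ∈ Icc 0 1 := by
  rw [cantorC_eq_digitSum]
  exact digitSum_mem_Icc (interleave_mem (decimalDigits_mem_Icc x) (decimalDigits_mem_Icc y))

theorem injOn_cantorC : InjOn (fun p : ℝ × ℝ => cantorC p.1 p.2) (Ico 0 1 ×ˢ Ico 0 1) := by
  rintro ⟨x, y⟩ ⟨hx, hy⟩ ⟨x', y'⟩ ⟨hx', hy'⟩ h
  simp only [cantorC_eq_digitSum] at h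
  obtain ⟨hxx', hyy'⟩ := digitSum_interleave_inj (isProperExpansion_decimalDigits hx)
    (isProperExpansion_decimalDigits hx') (decimalDigits_mem_Icc y) (decimalDigits_mem_Icc y') h
  exact Prod.ext (leftInvOn_digitSum_decimalDigits.injOn hx hx' hxx')
    (leftInvOn_digitSum_decimalDigits.injOn hy hy' hyy')

/-- No `cantorC x y` with `y ∈ [0,1)` has all its even-place digits equal to `9`. -/
noncomputable def padNines (x : ℝ) : ℝ := digitSum (interleave (decimalDigits x) fun _ => 9)

theorem nine_mem_Icc : (9 : ℤ) ∈ Icc 0 9 := right_mem_Icc.mpr (by norm_num)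

theorem padNines_mem_Icc (x : ℝ) : padNines x ∈ Icc 0 1 :=
  digitSum_mem_Icc (interleave_mem (decimalDigits_mem_Icc x) fun _ => nine_mem_Icc)

theorem injOn_padNines : InjOn padNines (Ico 0 1) := fun _ hx _ hx' h =>
  leftInvOn_digitSum_decimalDigits.injOn hx hx' <| (digitSum_interleave_inj
    (isProperExpansion_decimalDigits hx) (isProperExpansion_decimalDigits hx')
    (fun _ => nine_mem_Icc) (fun _ => nine_mem_Icc) h).1

theorem padNines_ne_cantorC {x x' y' : ℝ} (hx : x ∈ Ico 0 1) (hx' : x' ∈ Ico 0 1)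
    (hy' : y' ∈ Ico 0 1) : padNines x ≠ cantorC x' y' := by
  intro h
  rw [padNines, cantorC_eq_digitSum] at h
  have h_nines := (digitSum_interleave_inj (isProperExpansion_decimalDigits hx)
    (isProperExpansion_decimalDigits hx') (fun _ => nine_mem_Icc) (decimalDigits_mem_Icc y')
    h).2
  obtain ⟨k, hk⟩ := (isProperExpansion_decimalDigits hy').frequently_ne_nine.exists
  exact hk (congrFun h_nines k).symm

theorem mk_Icc_prod_Icc_sdiff :
    #(Icc 0 1 ×ˢ Icc 0 1 \ Ico 0 1 ×ˢ Ioo 0 1 : Set (ℝ × ℝ)) = 𝔠 := by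
  have h_le : #(ℝ × ℝ) ≤ 𝔠 := by rw [mk_prod, lift_id, mk_real, continuum_mul_self]
  refine le_antisymm ((mk_subtype_le _).trans h_le) ?_
  have h_edge :
      Icc (0 : ℝ) 1 ×ˢ ({0} : Set ℝ) ⊆ Icc 0 1 ×ˢ Icc 0 1 \ Ico 0 1 ×ˢ Ioo 0 1 :=
    fun p ⟨hp1, hp2⟩ => ⟨⟨hp1, by simp_all⟩, fun hp => by simp_all⟩
  calc 𝔠 = #(Icc (0 : ℝ) 1) := (mk_Icc_real one_pos).symm
    _ = #(Icc (0 : ℝ) 1 ×ˢ ({0} : Set ℝ)) := by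
      rw [prod_singleton, mk_image_eq (Prod.mk_left_injective 0)]
    _ ≤ _ := mk_le_mk_of_subset h_edge

theorem mk_Icc_sdiff_image_cantorC :
    #(Icc 0 1 \ (fun p : ℝ × ℝ => cantorC p.1 p.2) '' (Ico 0 1 ×ˢ Ioo 0 1) : Set ℝ) = 𝔠 := by
  refine le_antisymm ((mk_subtype_le _).trans mk_real.le) ?_
  have h_pad : padNines '' Ico 0 1 ⊆
      Icc 0 1 \ (fun p : ℝ × ℝ => cantorC p.1 p.2) '' (Ico 0 1 ×ˢ Ioo 0 1) := by
    rintro _ ⟨x, hx, rfl⟩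
    refine ⟨padNines_mem_Icc x, ?_⟩
    rintro ⟨⟨x', y'⟩, ⟨hx', hy'⟩, h⟩
    exact padNines_ne_cantorC hx hx' (Ioo_subset_Ico_self hy') h.symm
  calc 𝔠 = #(Ico (0 : ℝ) 1) := (mk_Ico_real one_pos).symm
    _ = #(padNines '' Ico 0 1) := (mk_image_eq_of_injOn _ _ injOn_padNines).symm
    _ ≤ _ := mk_le_mk_of_subset h_pad

theorem volume_Icc_prod_Icc_sdiff :
    volume (Icc 0 1 ×ˢ Icc 0 1 \ Ico 0 1 ×ˢ Ioo 0 1 : Set (ℝ × ℝ)) = 0 := by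
  rw [measure_sdiff (Set.prod_mono Ico_subset_Icc_self Ioo_subset_Icc_self)
    (measurableSet_Ico.prod measurableSet_Ioo).nullMeasurableSet
    (by rw [Measure.volume_eq_prod, Measure.prod_prod]; simp), Measure.volume_eq_prod,
    Measure.prod_prod, Measure.prod_prod]
  simp

/-- There exists a bijection `h : [0,1]² → [0,1]` with `h(x,y) = C(x,y)` for all
`(x,y) ∈ [0,1) × (0,1)`; in particular `h` agrees with Cantor's interleaving map `C`
almost everywhere on `[0,1]²` with respect to the Lebesgue measure. -/
theorem exists_bijection_eq_cantorC_ae :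
    ∃ h : ℝ × ℝ → ℝ,
      Set.BijOn h (Icc 0 1 ×ˢ Icc 0 1) (Icc (0 : ℝ) 1) ∧
        (∀ x ∈ Ico (0 : ℝ) 1, ∀ y ∈ Ioo (0 : ℝ) 1, h (x, y) = cantorC x y) ∧
        MeasureTheory.volume
          {p : ℝ × ℝ | p ∈ Icc (0 : ℝ) 1 ×ˢ Icc (0 : ℝ) 1 ∧ h p ≠ cantorC p.1 p.2} = 0 := by
  obtain ⟨h, h_bij, h_eq⟩ :=
    (injOn_cantorC.mono (Set.prod_mono subset_rfl Ioo_subset_Ico_self)).exists_bijOn_extend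
      (Set.prod_mono Ico_subset_Icc_self Ioo_subset_Icc_self)
      (fun p _ => cantorC_mem_Icc p.1 p.2)
      (mk_Icc_prod_Icc_sdiff.trans mk_Icc_sdiff_image_cantorC.symm)
  refine ⟨h, h_bij, fun x hx y hy => h_eq ⟨hx, hy⟩,
    measure_mono_null ?_ volume_Icc_prod_Icc_sdiff⟩
  exact fun p ⟨hp, hne⟩ => ⟨hp, fun hpA => hne (h_eq hpA)⟩
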